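/- arXiv:1909.02540 — 3 statements merged into one kernel-verified Lean document; each statement's English description precedes it below -/
import Mathlib

section
/- Let ρ be a full-rank density matrix on ℂ^d, let F be a nonempty closed set of density matrices on ℂ^d with R_F(ρ) < ∞, and let F' be a set of density matrices on ℂ^{d'}. Let (L, G) be a probabilistic free protocol from (F, ℂ^d) to (F', ℂ^{d'}). Suppose p := Tr(L(ρ)) > 0, and the output state τ := L(ρ)/p satisfies ⟨ψ, τ ψ⟩ ≥ 1 − ε for some unit vector ψ ∈ ℂ^{d'} and ε ≥ 0. Then ε/p ≥ λ_min(ρ)·(1 − f_ψ)/(1 + R_F(ρ)), where f_ψ := sup_{ω ∈ F'} ⟨ψ, ω ψ⟩. (Theorem 1, probabilistic case: trade-off between success probability and purification error.) -/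
open scoped Matrix ComplexOrder

noncomputable section

/-- A density matrix: a positive semidefinite complex matrix with unit trace. -/
def IsDensity {n : Type*} [Fintype n] (A : Matrix n n ℂ) : Prop :=
  A.PosSemidef ∧ A.trace = 1

/-- The smallest eigenvalue of a Hermitian matrix (`0` by convention otherwise). -/
noncomputable def minEig {n : Type*} [Fintype n] [DecidableEq n] (A : Matrix n n ℂ) : ℝ :=
  letI := Classical.propDecidable A.IsHermitian
  if h : A.IsHermitian then ⨅ i, h.eigenvalues i else 0

/-- The overlap `⟨ψ, A ψ⟩` (as a real number). -/
noncomputable def overlap {n : Type*} [Fintype n] (A : Matrix n n ℂ) (ψ : n → ℂ) : ℝ :=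
  (dotProduct (star ψ) (A.mulVec ψ)).re

/-- `f_ψ = sup_{ω ∈ F} ⟨ψ, ω ψ⟩`, with the convention `sup ∅ = 0`. -/
noncomputable def maxOverlap {n : Type*} [Fintype n] (F : Set (Matrix n n ℂ)) (ψ : n → ℂ) : ℝ :=
  sSup ((fun ω => overlap ω ψ) '' F)

/-- A positive map: it sends positive semidefinite matrices to positive semidefinite matrices. -/
def PosMap {n m : Type*} [Fintype n] [Fintype m]
    (Φ : Matrix n n ℂ →ₗ[ℂ] Matrix m m ℂ) : Prop :=
  ∀ X, X.PosSemidef → (Φ X).PosSemidef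

/-- A trace-preserving map. -/
def TracePreserving {n m : Type*} [Fintype n] [Fintype m]
    (Φ : Matrix n n ℂ →ₗ[ℂ] Matrix m m ℂ) : Prop :=
  ∀ X, (Φ X).trace = X.trace

/-- The feasible set for the generalized robustness:
`{ s ≥ 0 : ∃ density σ, (ρ + sσ)/(1+s) ∈ F }`.  Its nonemptiness encodes `R_F(ρ) < ∞`. -/
def RobustSet {n : Type*} [Fintype n] (F : Set (Matrix n n ℂ)) (ρ : Matrix n n ℂ) : Set ℝ :=
  {s : ℝ | 0 ≤ s ∧ ∃ σ : Matrix n n ℂ, IsDensity σ ∧ (1 + s)⁻¹ • (ρ + s • σ) ∈ F}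

/-- The generalized robustness `R_F(ρ)`. -/
noncomputable def Robustness {n : Type*} [Fintype n] (F : Set (Matrix n n ℂ))
    (ρ : Matrix n n ℂ) : ℝ :=
  sInf (RobustSet F ρ)

/-! For `s` in the robustness set, `ω = (ρ + sσ)/(1 + s)` is free, so `L ω = t ω'` with `ω'` free.
Two Loewner-order inequalities drive the bound. From `ρ ≤ (1 + s) ω` and positivity of `L`,
taking traces gives `p ≤ (1 + s) t`. From `λ_min(ρ) ω ≤ λ_min(ρ) 1 ≤ ρ`, and since
`X ↦ Tr X - ⟨ψ, X ψ⟩` is monotone for a unit vector `ψ`, we get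
`λ_min(ρ) t (1 - f_ψ) ≤ Tr L(ρ) - ⟨ψ, L(ρ) ψ⟩ ≤ p ε`. Together these give
`λ_min(ρ) (1 - f_ψ) ≤ (1 + s) ε`; take the infimum over `s`, then use `p ≤ 1`, which holds
because `L + G` preserves trace and `G` is positive. -/

open Matrix
open scoped MatrixOrder

section Order

variable {n : Type*}

lemma le_one_add_smul_inv_smul_add_smul {ρ σ : Matrix n n ℂ} (hσ : σ.PosSemidef) {s : ℝ}
    (hs : 0 ≤ s) :
    ρ ≤ (1 + s) • ((1 + s)⁻¹ • (ρ + s • σ)) := by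
  rw [smul_inv_smul₀ (by positivity), Matrix.le_iff, add_sub_cancel_left]
  exact hσ.smul hs

variable [Fintype n]

lemma Matrix.trace_re_mono {A B : Matrix n n ℂ} (h : A ≤ B) : A.trace.re ≤ B.trace.re := by
  have := (Complex.le_def.mp (Matrix.le_iff.mp h).trace_nonneg).1
  simpa [trace_sub] using this

lemma overlap_sub (A B : Matrix n n ℂ) (ψ : n → ℂ) :
    overlap (A - B) ψ = overlap A ψ - overlap B ψ := by
  simp [overlap, sub_mulVec, dotProduct_sub]

lemma overlap_smul (r : ℝ) (A : Matrix n n ℂ) (ψ : n → ℂ) :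
    overlap (r • A) ψ = r * overlap A ψ := by
  simp [overlap, smul_mulVec, dotProduct_smul]

lemma overlap_mono {A B : Matrix n n ℂ} (h : A ≤ B) (ψ : n → ℂ) :
    overlap A ψ ≤ overlap B ψ := by
  have : 0 ≤ overlap (B - A) ψ := (Matrix.le_iff.mp h).re_dotProduct_nonneg ψ
  rw [overlap_sub] at this
  linarith

variable [DecidableEq n]

lemma overlap_algebraMap (r : ℝ) (ψ : n → ℂ) :
    overlap (algebraMap ℝ (Matrix n n ℂ) r) ψ = r * (star ψ ⬝ᵥ ψ).re := by
  rw [Algebra.algebraMap_eq_smul_one, overlap_smul]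
  simp [overlap]

lemma Matrix.IsHermitian.algebraMap_minEig_le {A : Matrix n n ℂ} (hA : A.IsHermitian) :
    algebraMap ℝ _ (minEig A) ≤ A := by
  refine algebraMap_le_of_le_spectrum ?_ (ha := hA)
  rw [hA.spectrum_real_eq_range_eigenvalues]
  rintro _ ⟨i, rfl⟩
  rw [minEig, dif_pos hA]
  exact ciInf_le (Set.finite_range _).bddBelow i

lemma Matrix.PosSemidef.le_algebraMap_trace_re {A : Matrix n n ℂ} (hA : A.PosSemidef) :
    A ≤ algebraMap ℝ _ A.trace.re := by
  refine le_algebraMap_of_spectrum_le ?_ (ha := hA.1)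
  rw [hA.1.spectrum_real_eq_range_eigenvalues]
  rintro _ ⟨i, rfl⟩
  rw [hA.1.trace_eq_sum_eigenvalues]
  simp only [Complex.re_sum]
  exact Finset.single_le_sum (fun j _ => hA.eigenvalues_nonneg j) (Finset.mem_univ i)

lemma Matrix.PosSemidef.minEig_nonneg {A : Matrix n n ℂ} (hA : A.PosSemidef) : 0 ≤ minEig A := by
  rw [minEig, dif_pos hA.1]
  exact Real.iInf_nonneg hA.eigenvalues_nonneg

lemma IsDensity.le_one {ω : Matrix n n ℂ} (hω : IsDensity ω) : ω ≤ 1 := by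
  simpa [hω.2] using hω.1.le_algebraMap_trace_re

lemma minEig_smul_le {ρ ω : Matrix n n ℂ} (hρ : ρ.PosSemidef) (hω : IsDensity ω) :
    minEig ρ • ω ≤ ρ :=
  calc minEig ρ • ω ≤ minEig ρ • (1 : Matrix n n ℂ) :=
        smul_le_smul_of_nonneg_left hω.le_one hρ.minEig_nonneg
    _ = algebraMap ℝ _ (minEig ρ) := (Algebra.algebraMap_eq_smul_one _).symm
    _ ≤ ρ := hρ.1.algebraMap_minEig_le

lemma overlap_le_trace_re {A : Matrix n n ℂ} (hA : A.PosSemidef) {ψ : n → ℂ}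
    (hψ : star ψ ⬝ᵥ ψ = 1) : overlap A ψ ≤ A.trace.re := by
  simpa [overlap_algebraMap, hψ] using overlap_mono hA.le_algebraMap_trace_re ψ

lemma trace_re_sub_overlap_mono {A B : Matrix n n ℂ} (h : A ≤ B) {ψ : n → ℂ}
    (hψ : star ψ ⬝ᵥ ψ = 1) : A.trace.re - overlap A ψ ≤ B.trace.re - overlap B ψ := by
  have := overlap_le_trace_re (Matrix.le_iff.mp h) hψ
  rw [overlap_sub, trace_sub, Complex.sub_re] at this
  linarith

end Order

section MaxOverlap

variable {n : Type*} [Fintype n] [DecidableEq n] {F : Set (Matrix n n ℂ)} {ψ : n → ℂ}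

lemma IsDensity.overlap_le_one {ω : Matrix n n ℂ} (hω : IsDensity ω) (hψ : star ψ ⬝ᵥ ψ = 1) :
    overlap ω ψ ≤ 1 := by
  simpa [hω.2] using overlap_le_trace_re hω.1 hψ

lemma overlap_le_maxOverlap (hF : ∀ ω ∈ F, IsDensity ω) (hψ : star ψ ⬝ᵥ ψ = 1) {ω : Matrix n n ℂ}
    (hω : ω ∈ F) : overlap ω ψ ≤ maxOverlap F ψ :=
  le_csSup ⟨1, by rintro _ ⟨ω, hω, rfl⟩; exact (hF ω hω).overlap_le_one hψ⟩ ⟨ω, hω, rfl⟩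

lemma maxOverlap_le_one (hF : ∀ ω ∈ F, IsDensity ω) (hψ : star ψ ⬝ᵥ ψ = 1) :
    maxOverlap F ψ ≤ 1 :=
  Real.sSup_le (by rintro _ ⟨ω, hω, rfl⟩; exact (hF ω hω).overlap_le_one hψ) zero_le_one

end MaxOverlap

section Protocol

variable {n m : Type*} [Fintype n] [Fintype m] {L G : Matrix n n ℂ →ₗ[ℂ] Matrix m m ℂ}

lemma PosMap.monotone (hL : PosMap L) : Monotone L := fun A B h => by
  simpa only [Matrix.le_iff, map_sub] using hL _ (Matrix.le_iff.mp h)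

lemma trace_re_map_le_of_posMap_complement (hG : PosMap G)
    (hTP : ∀ X, (L X).trace + (G X).trace = X.trace) {X : Matrix n n ℂ} (hX : X.PosSemidef) :
    (L X).trace.re ≤ X.trace.re := by
  have := (Complex.le_def.mp (hG X hX).trace_nonneg).1
  rw [← hTP X, Complex.add_re]
  simpa using this

variable [DecidableEq n] [DecidableEq m]

theorem minEig_mul_one_sub_maxOverlap_mul_le {ρ : Matrix n n ℂ} (hρ : ρ.PosSemidef)
    {F : Set (Matrix n n ℂ)} (hF : ∀ ω ∈ F, IsDensity ω)
    {F' : Set (Matrix m m ℂ)} (hF' : ∀ ω ∈ F', IsDensity ω) (hL : PosMap L)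
    (hLfree : ∀ ω ∈ F, ∃ t : ℝ, 0 ≤ t ∧ ∃ ω' ∈ F', L ω = (t : ℂ) • ω')
    {ψ : m → ℂ} (hψ : star ψ ⬝ᵥ ψ = 1) {s : ℝ} (hs : s ∈ RobustSet F ρ) :
    minEig ρ * (1 - maxOverlap F' ψ) * (L ρ).trace.re
      ≤ (1 + s) * ((L ρ).trace.re - overlap (L ρ) ψ) := by
  obtain ⟨hs, σ, hσ, hωF⟩ := hs
  set ω := (1 + s)⁻¹ • (ρ + s • σ)
  obtain ⟨t, ht, ω', hω'F', hLω⟩ := hLfree ω hωF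
  rw [Complex.coe_smul] at hLω
  have hω' := hF' ω' hω'F'
  have hlam := hρ.minEig_nonneg
  have hf := maxOverlap_le_one hF' hψ
  have htrace : (L ρ).trace.re ≤ (1 + s) * t := by
    have hmix : ρ ≤ (1 + s) • ω := le_one_add_smul_inv_smul_add_smul hσ.1 hs
    simpa [LinearMap.map_smul_of_tower, hLω, smul_smul, hω'.2]
      using trace_re_mono (hL.monotone hmix)
  have hdefect : minEig ρ * t * (1 - overlap ω' ψ) ≤ (L ρ).trace.re - overlap (L ρ) ψ := by
    have := trace_re_sub_overlap_mono (hL.monotone (minEig_smul_le hρ (hF ω hωF))) hψ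
    simpa [LinearMap.map_smul_of_tower, hLω, smul_smul, hω'.2, overlap_smul, mul_sub] using this
  have hover := overlap_le_maxOverlap hF' hψ hω'F'
  calc minEig ρ * (1 - maxOverlap F' ψ) * (L ρ).trace.re
      ≤ minEig ρ * (1 - maxOverlap F' ψ) * ((1 + s) * t) := by gcongr
    _ = (1 + s) * (minEig ρ * t * (1 - maxOverlap F' ψ)) := by ring
    _ ≤ (1 + s) * (minEig ρ * t * (1 - overlap ω' ψ)) := by gcongr
    _ ≤ (1 + s) * ((L ρ).trace.re - overlap (L ρ) ψ) := by gcongr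

end Protocol

lemma le_mul_one_add_csInf {S : Set ℝ} (hS : S.Nonempty) {a c : ℝ} (hc : 0 ≤ c)
    (h : ∀ s ∈ S, a ≤ c * (1 + s)) : a ≤ c * (1 + sInf S) := by
  rcases hc.eq_or_lt with rfl | hc
  · obtain ⟨s, hs⟩ := hS
    simpa using h s hs
  have hinf : a / c - 1 ≤ sInf S := le_csInf hS fun s hs => by
    rw [sub_le_iff_le_add, div_le_iff₀ hc]
    linarith [h s hs]
  calc a = c * (1 + (a / c - 1)) := by field_simp; ring
    _ ≤ c * (1 + sInf S) := by gcongr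

theorem no_go_purification_probabilistic_general {d d' : ℕ}
    (ρ : Matrix (Fin d) (Fin d) ℂ) (hρ : IsDensity ρ)
    (F : Set (Matrix (Fin d) (Fin d) ℂ))
    (hFden : ∀ ω ∈ F, IsDensity ω)
    (hRfin : (RobustSet F ρ).Nonempty)
    (F' : Set (Matrix (Fin d') (Fin d') ℂ)) (hF'den : ∀ ω ∈ F', IsDensity ω)
    (L G : Matrix (Fin d) (Fin d) ℂ →ₗ[ℂ] Matrix (Fin d') (Fin d') ℂ)
    (hLpos : PosMap L) (hGpos : PosMap G)
    (hTP : ∀ X, (L X).trace + (G X).trace = X.trace)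
    (hLfree : ∀ ω ∈ F, ∃ t : ℝ, 0 ≤ t ∧ ∃ ω' ∈ F', L ω = (t : ℂ) • ω')
    (p : ℝ) (hp : p = ((L ρ).trace).re) (hppos : 0 < p)
    (τ : Matrix (Fin d') (Fin d') ℂ) (hτ : τ = p⁻¹ • L ρ)
    (ψ : Fin d' → ℂ) (hψ : dotProduct (star ψ) ψ = 1)
    (ε : ℝ) (hε : 0 ≤ ε)
    (hfid : 1 - ε ≤ overlap τ ψ) :
    minEig ρ * (1 - maxOverlap F' ψ) / (1 + Robustness F ρ) ≤ ε / p := by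
  have hp1 : p ≤ 1 := by
    simpa [hp, hρ.2] using trace_re_map_le_of_posMap_complement hGpos hTP hρ.1
  have herror : (L ρ).trace.re - overlap (L ρ) ψ ≤ p * ε := by
    rw [hτ, overlap_smul, le_inv_mul_iff₀ hppos] at hfid
    rw [← hp]
    linarith
  have hbound : ∀ s ∈ RobustSet F ρ, minEig ρ * (1 - maxOverlap F' ψ) ≤ ε * (1 + s) := by
    intro s hs
    refine le_of_mul_le_mul_right ?_ hppos
    calc minEig ρ * (1 - maxOverlap F' ψ) * p
        ≤ (1 + s) * ((L ρ).trace.re - overlap (L ρ) ψ) := by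
          rw [hp]; exact minEig_mul_one_sub_maxOverlap_mul_le hρ.1 hFden hF'den hLpos hLfree hψ hs
      _ ≤ ε * (1 + s) * p := by nlinarith [hs.1]
  have hR : 0 ≤ Robustness F ρ := Real.sInf_nonneg fun s hs => hs.1
  calc minEig ρ * (1 - maxOverlap F' ψ) / (1 + Robustness F ρ) ≤ ε :=
        div_le_of_le_mul₀ (by linarith) hε (le_mul_one_add_csInf hRfin hε hbound)
    _ ≤ ε / p := le_div_self hε hppos hp1

/-- **Theorem 1, probabilistic case.**  Trade-off between the success probability and the
purification error of any probabilistic free protocol `(L, G)`: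
`ε/p ≥ λ_min(ρ)(1 - f_ψ)/(1 + R_F(ρ))`. -/
theorem no_go_purification_probabilistic {d d' : ℕ}
    (ρ : Matrix (Fin d) (Fin d) ℂ) (hρ : IsDensity ρ) (hρfull : 0 < minEig ρ)
    (F : Set (Matrix (Fin d) (Fin d) ℂ)) (hFne : F.Nonempty) (hFcl : IsClosed F)
    (hFden : ∀ ω ∈ F, IsDensity ω)
    (hRfin : (RobustSet F ρ).Nonempty)
    (F' : Set (Matrix (Fin d') (Fin d') ℂ)) (hF'den : ∀ ω ∈ F', IsDensity ω)
    (L G : Matrix (Fin d) (Fin d) ℂ →ₗ[ℂ] Matrix (Fin d') (Fin d') ℂ)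
    (hLpos : PosMap L) (hGpos : PosMap G)
    (hTP : ∀ X, (L X).trace + (G X).trace = X.trace)
    (hLfree : ∀ ω ∈ F, ∃ t : ℝ, 0 ≤ t ∧ ∃ ω' ∈ F', L ω = (t : ℂ) • ω')
    (p : ℝ) (hp : p = ((L ρ).trace).re) (hppos : 0 < p)
    (τ : Matrix (Fin d') (Fin d') ℂ) (hτ : τ = p⁻¹ • L ρ)
    (ψ : Fin d' → ℂ) (hψ : dotProduct (star ψ) ψ = 1)
    (ε : ℝ) (hε : 0 ≤ ε)
    (hfid : 1 - ε ≤ overlap τ ψ) :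
    minEig ρ * (1 - maxOverlap F' ψ) / (1 + Robustness F ρ) ≤ ε / p :=
  no_go_purification_probabilistic_general ρ hρ F hFden hRfin F' hF'den L G hLpos hGpos hTP hLfree p
    hp hppos τ hτ ψ hψ ε hε hfid

end
end

section
/- Let ρ be a full-rank density matrix on ℂ^d and let 0 ≤ ε < λ_min(ρ). If M is a d×d complex matrix with 0 ≤ M ≤ I in the Loewner order and Tr(ρ M) ≥ 1 − ε, then M − (1 − ε/λ_min(ρ))·I is positive semidefinite, i.e., every eigenvalue of M is at least 1 − ε/λ_min(ρ). (Key intermediate claim in the proof of Lemma S1.) -/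
open scoped Matrix ComplexOrder

noncomputable section

/-!
Write `λ = λ_min(ρ)` and `N = I - M ≥ 0`. Since `ρ ≥ λ I` and the trace pairing of positive
semidefinite matrices is nonnegative, `λ Tr N ≤ Tr(ρ N) = 1 - Tr(ρ M) ≤ ε`. A positive
semidefinite matrix is bounded by its trace times `I`, so `N ≤ (ε / λ) I`, which is the claim.
-/

open scoped MatrixOrder

namespace Matrix

variable {n 𝕜 : Type*} [Fintype n] [RCLike 𝕜]

theorem PosSemidef.trace_mul_nonneg {A B : Matrix n n 𝕜} (hA : A.PosSemidef)
    (hB : B.PosSemidef) : 0 ≤ (A * B).trace := by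
  classical
  obtain ⟨C, rfl⟩ := CStarAlgebra.nonneg_iff_eq_star_mul_self.mp hB.nonneg
  rw [← Matrix.mul_assoc, trace_mul_cycle]
  exact (hA.mul_mul_conjTranspose_same C).trace_nonneg

theorem trace_mul_le_trace_mul_of_le {A B N : Matrix n n 𝕜} (hAB : A ≤ B)
    (hN : N.PosSemidef) : (A * N).trace ≤ (B * N).trace := by
  rw [← sub_nonneg, ← trace_sub, ← Matrix.sub_mul]
  exact hAB.trace_mul_nonneg hN

variable [DecidableEq n]

theorem IsHermitian.smul_one_le {A : Matrix n n 𝕜} (hA : A.IsHermitian) {c : ℝ}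
    (h : ∀ i, c ≤ hA.eigenvalues i) : c • (1 : Matrix n n 𝕜) ≤ A := by
  rw [← Algebra.algebraMap_eq_smul_one]
  refine algebraMap_le_of_le_spectrum (fun x hx => ?_) hA.isSelfAdjoint
  obtain ⟨i, rfl⟩ := hA.spectrum_real_eq_range_eigenvalues ▸ hx
  exact h i

theorem IsHermitian.le_smul_one {A : Matrix n n 𝕜} (hA : A.IsHermitian) {c : ℝ}
    (h : ∀ i, hA.eigenvalues i ≤ c) : A ≤ c • (1 : Matrix n n 𝕜) := by
  rw [← Algebra.algebraMap_eq_smul_one]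
  refine le_algebraMap_of_spectrum_le (fun x hx => ?_) hA.isSelfAdjoint
  obtain ⟨i, rfl⟩ := hA.spectrum_real_eq_range_eigenvalues ▸ hx
  exact h i

theorem PosSemidef.le_smul_one_of_re_trace_le {A : Matrix n n 𝕜} (hA : A.PosSemidef) {c : ℝ}
    (h : RCLike.re A.trace ≤ c) : A ≤ c • (1 : Matrix n n 𝕜) := by
  refine hA.1.le_smul_one fun i => le_trans ?_ h
  rw [hA.1.trace_eq_sum_eigenvalues, ← RCLike.ofReal_sum, RCLike.ofReal_re]
  exact Finset.single_le_sum (fun j _ => hA.eigenvalues_nonneg j) (Finset.mem_univ i)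

end Matrix

theorem minEig_smul_one_le {n : Type*} [Fintype n] [DecidableEq n] {A : Matrix n n ℂ}
    (hA : A.IsHermitian) : minEig A • (1 : Matrix n n ℂ) ≤ A := by
  refine hA.smul_one_le fun i => ?_
  rw [minEig, dif_pos hA]
  exact ciInf_le (Set.finite_range _).bddBelow i

theorem feasible_test_lower_bound_general {d : ℕ}
    (ρ : Matrix (Fin d) (Fin d) ℂ) (hρ : IsDensity ρ) (hρfull : 0 < minEig ρ)
    (ε : ℝ)
    (M : Matrix (Fin d) (Fin d) ℂ) (hM1 : (1 - M).PosSemidef)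
    (htr : 1 - ε ≤ ((ρ * M).trace).re) :
    (M - (1 - ε / minEig ρ) • (1 : Matrix (Fin d) (Fin d) ℂ)).PosSemidef := by
  have hmass : minEig ρ * (1 - M).trace.re ≤ ε :=
    calc minEig ρ * (1 - M).trace.re
        = ((minEig ρ • 1 : Matrix (Fin d) (Fin d) ℂ) * (1 - M)).trace.re := by
          simp [Matrix.trace_smul]
      _ ≤ (ρ * (1 - M)).trace.re := Complex.le_def.mp
          (Matrix.trace_mul_le_trace_mul_of_le (minEig_smul_one_le hρ.1.1) hM1) |>.1
      _ = 1 - (ρ * M).trace.re := by simp [Matrix.mul_sub, Matrix.trace_sub, hρ.2]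
      _ ≤ ε := by linarith
  have hle : 1 - M ≤ (ε / minEig ρ) • (1 : Matrix (Fin d) (Fin d) ℂ) :=
    hM1.le_smul_one_of_re_trace_le ((le_div_iff₀' hρfull).mpr hmass)
  have hshift : M - (1 - ε / minEig ρ) • (1 : Matrix (Fin d) (Fin d) ℂ) =
      (ε / minEig ρ) • 1 - (1 - M) := by
    rw [sub_smul, one_smul]
    abel
  exact hshift ▸ hle

/-- Key intermediate claim in the proof of Lemma S1: any feasible test operator for a
full-rank state must be bounded below by `(1 - ε/λ_min(ρ)) · I`. -/
theorem feasible_test_lower_bound {d : ℕ}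
    (ρ : Matrix (Fin d) (Fin d) ℂ) (hρ : IsDensity ρ) (hρfull : 0 < minEig ρ)
    (ε : ℝ) (hε : 0 ≤ ε) (hεlt : ε < minEig ρ)
    (M : Matrix (Fin d) (Fin d) ℂ) (hM0 : M.PosSemidef) (hM1 : (1 - M).PosSemidef)
    (htr : 1 - ε ≤ ((ρ * M).trace).re) :
    (M - (1 - ε / minEig ρ) • (1 : Matrix (Fin d) (Fin d) ℂ)).PosSemidef :=
  feasible_test_lower_bound_general ρ hρ hρfull ε M hM1 htr
end
end

section
/- Let F be a set of density matrices on ℂ^d, let n ≥ 1, and let F_n be a set of density matrices on ℂ^{d^n} such that ω^{⊗n} ∈ F_n for every ω ∈ F. Then for every density matrix ρ on ℂ^d, 1 + R_{F_n}(ρ^{⊗n}) ≤ (1 + R_F(ρ))^n. (Submultiplicativity of the generalized robustness under tensor powers, as used in the proof of Theorem 2.) -/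
open scoped Matrix ComplexOrder

noncomputable section

/-- The `n`-fold Kronecker power of a `d × d` matrix, realized on the index type
`Fin n → Fin d` (canonically identifying `ℂ^{d^n} ≅ (ℂ^d)^{⊗n}`). -/
noncomputable def kronPow {d : ℕ} (A : Matrix (Fin d) (Fin d) ℂ) (n : ℕ) :
    Matrix (Fin n → Fin d) (Fin n → Fin d) ℂ :=
  Matrix.of fun x y => ∏ i, A (x i) (y i)

open scoped ENNReal

/-- The generalized robustness as an extended real number, with value `∞` when no feasible
`s` exists. -/
noncomputable def eRobustness {n : Type*} [Fintype n] (F : Set (Matrix n n ℂ))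
    (ρ : Matrix n n ℂ) : ℝ≥0∞ :=
  ⨅ s ∈ RobustSet F ρ, ENNReal.ofReal s

/-! Feasibility of `s` for `ρ` says exactly that `ρ ≤ (1 + s) τ` in the Loewner order for some
`τ ∈ F`. Writing `(1 + s) τ = ρ + P` with `P ≥ 0` and expanding `(ρ + P)^{⊗n}`, every term other
than `ρ^{⊗n}` is a Kronecker product of positive matrices, so `ρ^{⊗n} ≤ (1 + s)^n τ^{⊗n}`, and
`τ^{⊗n} ∈ F_n`: thus `(1 + s)^n - 1` is feasible for `ρ^{⊗n}`. Taking the infimum over `s` gives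
the claim, since `x ↦ (1 + x)^n` is monotone and continuous on `[0, ∞]`. -/

open Finset

section PiKron

variable {ι κ μ ν R : Type*} [Fintype ι]

def piKron [CommMonoid R] (A : ι → Matrix κ μ R) : Matrix (ι → κ) (ι → μ) R :=
  Matrix.of fun x y => ∏ i, A i (x i) (y i)

variable [CommSemiring R] [DecidableEq ι]

theorem piKron_mul [Fintype μ] (A : ι → Matrix κ μ R) (B : ι → Matrix μ ν R) :
    piKron (fun i => A i * B i) = piKron A * piKron B := by
  ext x y
  simp only [piKron, Matrix.of_apply, Matrix.mul_apply, prod_univ_sum, Fintype.piFinset_univ,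
    prod_mul_distrib]

omit [DecidableEq ι] in
theorem piKron_conjTranspose [StarRing R] (A : ι → Matrix κ μ R) :
    (piKron A)ᴴ = piKron fun i => (A i)ᴴ := by
  ext x y
  simp [piKron, star_prod]

theorem trace_piKron [Fintype κ] (A : ι → Matrix κ κ R) :
    (piKron A).trace = ∏ i, (A i).trace := by
  simp only [Matrix.trace, Matrix.diag, piKron, Matrix.of_apply, prod_univ_sum,
    Fintype.piFinset_univ]

theorem piKron_add (A B : ι → Matrix κ μ R) :
    piKron (A + B) = ∑ t : Finset ι, piKron (t.piecewise B A) := by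
  ext x y
  simp only [piKron, Matrix.of_apply, Matrix.sum_apply, Pi.add_apply, Matrix.add_apply,
    add_comm (A _ _ _), Fintype.prod_add]
  refine sum_congr rfl fun t _ => ?_
  have h := prod_piecewise univ t (fun i => B i (x i) (y i)) (fun i => A i (x i) (y i))
  rw [univ_inter, ← compl_eq_univ_sdiff] at h
  rw [← h]
  exact prod_congr rfl fun i _ => by by_cases hi : i ∈ t <;> simp [hi]

theorem posSemidef_piKron {𝕜 : Type*} [RCLike 𝕜] [Fintype κ] {A : ι → Matrix κ κ 𝕜}
    (hA : ∀ i, (A i).PosSemidef) : (piKron A).PosSemidef := by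
  classical
  open scoped MatrixOrder Matrix.Norms.L2Operator in
  choose B hB using fun i => CStarAlgebra.nonneg_iff_eq_star_mul_self.mp (hA i).nonneg
  rw [funext hB]
  simp only [Matrix.star_eq_conjTranspose]
  rw [piKron_mul, ← piKron_conjTranspose]
  exact Matrix.posSemidef_conjTranspose_mul_self _

theorem posSemidef_piKron_add_sub {𝕜 : Type*} [RCLike 𝕜] [Fintype κ] {A B : ι → Matrix κ κ 𝕜}
    (hA : ∀ i, (A i).PosSemidef) (hB : ∀ i, (B i).PosSemidef) :
    (piKron (A + B) - piKron A).PosSemidef := by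
  rw [piKron_add, ← sum_erase_add _ _ (mem_univ ∅), piecewise_empty, add_sub_cancel_right]
  refine Matrix.posSemidef_sum _ fun t _ => posSemidef_piKron fun i => ?_
  by_cases hi : i ∈ t <;> simp [hi, hA, hB]

end PiKron

section KronPow

variable {d n : ℕ}

theorem kronPow_eq_piKron (A : Matrix (Fin d) (Fin d) ℂ) : kronPow A n = piKron fun _ => A := rfl

theorem trace_kronPow (A : Matrix (Fin d) (Fin d) ℂ) : (kronPow A n).trace = A.trace ^ n := by
  simp [kronPow_eq_piKron, trace_piKron]

theorem kronPow_smul (c : ℝ) (A : Matrix (Fin d) (Fin d) ℂ) :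
    kronPow (c • A) n = c ^ n • kronPow A n := by
  ext x y
  simp [kronPow, Complex.real_smul, prod_mul_distrib]

theorem posSemidef_kronPow_sub_kronPow {A B : Matrix (Fin d) (Fin d) ℂ}
    (hA : A.PosSemidef) (hBA : (B - A).PosSemidef) : (kronPow B n - kronPow A n).PosSemidef := by
  simpa [kronPow_eq_piKron, Pi.add_def] using
    posSemidef_piKron_add_sub (A := fun _ : Fin n => A) (fun _ => hA) (fun _ => hBA)

theorem IsDensity.kronPow {ρ : Matrix (Fin d) (Fin d) ℂ} (hρ : IsDensity ρ) :
    IsDensity (kronPow ρ n) :=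
  ⟨posSemidef_piKron fun _ => hρ.1, by rw [trace_kronPow, hρ.2, one_pow]⟩

end KronPow

section Robustness

variable {m : Type*} [Fintype m] {F : Set (Matrix m m ℂ)} {ρ : Matrix m m ℂ} {s : ℝ}

theorem mem_robustSet_iff (hρ : IsDensity ρ) :
    s ∈ RobustSet F ρ ↔ 0 ≤ s ∧ ∃ τ ∈ F, τ.trace = 1 ∧ ((1 + s) • τ - ρ).PosSemidef := by
  constructor
  · rintro ⟨hs, σ, hσ, hτ⟩
    have hs1 : 1 + s ≠ 0 := by positivity
    refine ⟨hs, _, hτ, ?_, ?_⟩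
    · rw [Matrix.trace_smul, Matrix.trace_add, Matrix.trace_smul, hρ.2, hσ.2]
      simp only [Complex.real_smul, mul_one, smul_add, Complex.ofReal_inv, Complex.ofReal_add,
        Complex.ofReal_one]
      field_simp
    · rw [smul_smul, mul_inv_cancel₀ hs1, one_smul, add_sub_cancel_left]
      exact hσ.1.smul hs
  · rintro ⟨hs, τ, hτF, hτ, hle⟩
    refine ⟨hs, ?_⟩
    rcases hs.eq_or_lt with rfl | hs
    · have : τ = ρ := by
        rw [add_zero, one_smul] at hle
        rw [← sub_eq_zero, ← hle.trace_eq_zero_iff, Matrix.trace_sub, hτ, hρ.2, sub_self]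
      exact ⟨ρ, hρ, by simpa [this] using hτF⟩
    · refine ⟨s⁻¹ • ((1 + s) • τ - ρ), ⟨hle.smul (inv_nonneg.2 hs.le), ?_⟩, ?_⟩
      · rw [Matrix.trace_smul, Matrix.trace_sub, Matrix.trace_smul, hτ, hρ.2]
        simp only [Complex.real_smul, Complex.ofReal_add, Complex.ofReal_one, mul_one,
          add_sub_cancel_left, Complex.ofReal_inv]
        field_simp
      · convert hτF using 1
        rw [smul_smul, mul_inv_cancel₀ hs.ne', one_smul, add_sub_cancel, smul_smul,
          inv_mul_cancel₀ (by positivity), one_smul]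

end Robustness

theorem pow_sub_one_mem_robustSet_kronPow {d n : ℕ} {F : Set (Matrix (Fin d) (Fin d) ℂ)}
    {Fn : Set (Matrix (Fin n → Fin d) (Fin n → Fin d) ℂ)} (hFnpow : ∀ ω ∈ F, kronPow ω n ∈ Fn)
    {ρ : Matrix (Fin d) (Fin d) ℂ} (hρ : IsDensity ρ) {s : ℝ} (hs : s ∈ RobustSet F ρ) :
    (1 + s) ^ n - 1 ∈ RobustSet Fn (kronPow ρ n) := by
  obtain ⟨hs, τ, hτF, hτ, hle⟩ := (mem_robustSet_iff hρ).1 hs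
  refine (mem_robustSet_iff hρ.kronPow).2 ⟨sub_nonneg.2 (one_le_pow₀ (by linarith)),
    _, hFnpow τ hτF, by rw [trace_kronPow, hτ, one_pow], ?_⟩
  rw [add_sub_cancel, ← kronPow_smul]
  exact posSemidef_kronPow_sub_kronPow hρ.1 hle

theorem one_add_eRobustness_le_pow {m m' : Type*} [Fintype m] [Fintype m']
    {F : Set (Matrix m m ℂ)} {ρ : Matrix m m ℂ} {F' : Set (Matrix m' m' ℂ)} {ρ' : Matrix m' m' ℂ}
    {n : ℕ} (hn : n ≠ 0) (h : ∀ s ∈ RobustSet F ρ, (1 + s) ^ n - 1 ∈ RobustSet F' ρ') :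
    1 + eRobustness F' ρ' ≤ (1 + eRobustness F ρ) ^ n := by
  have hmono : Monotone fun x : ℝ≥0∞ => (1 + x) ^ n := fun _ _ hab => by dsimp only; gcongr
  have hcont : Continuous fun x : ℝ≥0∞ => (1 + x) ^ n :=
    (ENNReal.continuous_pow n).comp (continuous_const_add 1)
  have hinf : eRobustness F ρ = sInf (ENNReal.ofReal '' RobustSet F ρ) := sInf_image.symm
  have hpow := hmono.map_sInf_of_continuousAt (s := ENNReal.ofReal '' RobustSet F ρ)
    hcont.continuousAt (by simp [ENNReal.top_pow hn])
  rw [hinf, hpow]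
  refine le_sInf ?_
  rintro _ ⟨_, ⟨s, hs, rfl⟩, rfl⟩
  have hs0 : 0 ≤ s := hs.1
  calc 1 + eRobustness F' ρ' ≤ 1 + ENNReal.ofReal ((1 + s) ^ n - 1) := by
        gcongr; exact iInf₂_le _ (h s hs)
    _ = (1 + ENNReal.ofReal s) ^ n := by
        rw [← ENNReal.ofReal_one, ← ENNReal.ofReal_add zero_le_one hs0,
          ← ENNReal.ofReal_pow (by positivity),
          ← ENNReal.ofReal_add zero_le_one (sub_nonneg.2 (one_le_pow₀ (by linarith))),
          add_sub_cancel]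

theorem robustness_tensor_power_general {d : ℕ}
    (F : Set (Matrix (Fin d) (Fin d) ℂ))
    (n : ℕ) (hn : 1 ≤ n)
    (Fn : Set (Matrix (Fin n → Fin d) (Fin n → Fin d) ℂ))
    (hFnpow : ∀ ω ∈ F, kronPow ω n ∈ Fn)
    (ρ : Matrix (Fin d) (Fin d) ℂ) (hρ : IsDensity ρ) :
    1 + eRobustness Fn (kronPow ρ n) ≤ (1 + eRobustness F ρ) ^ n :=
  one_add_eRobustness_le_pow (by omega) fun _ hs => pow_sub_one_mem_robustSet_kronPow hFnpow hρ hs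

/-- Submultiplicativity of the generalized robustness under tensor powers:
`1 + R_{F_n}(ρ^{⊗n}) ≤ (1 + R_F(ρ))^n`. -/
theorem robustness_tensor_power {d : ℕ}
    (F : Set (Matrix (Fin d) (Fin d) ℂ)) (hFden : ∀ ω ∈ F, IsDensity ω)
    (n : ℕ) (hn : 1 ≤ n)
    (Fn : Set (Matrix (Fin n → Fin d) (Fin n → Fin d) ℂ))
    (hFnden : ∀ ω ∈ Fn, IsDensity ω)
    (hFnpow : ∀ ω ∈ F, kronPow ω n ∈ Fn)
    (ρ : Matrix (Fin d) (Fin d) ℂ) (hρ : IsDensity ρ) :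
    1 + eRobustness Fn (kronPow ρ n) ≤ (1 + eRobustness F ρ) ^ n :=
  robustness_tensor_power_general F n hn Fn hFnpow ρ hρ
end
end
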